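/- Let S = Λ + M be a periodic point set in ℝ^n with unit cell U on a basis v_1, …, v_n, and for an integer k ≥ 2 let U_k be the cell on the basis k·v_1, …, k·v_n and M_k = S ∩ U_k the extended motif. Then β(S) ≤ β(M_k). -/

import Mathlib

noncomputable section

/-- `δ` bridges `S`: any two points of `S` are joined by a finite sequence of points of `S`
with consecutive distances at most `δ`. -/
def Bridges {n : ℕ} (δ : ℝ) (S : Set (EuclideanSpace ℝ (Fin n))) : Prop :=
  ∀ p ∈ S, ∀ q ∈ S, ∃ k : ℕ, ∃ f : Fin (k + 1) → EuclideanSpace ℝ (Fin n),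
    f 0 = p ∧ f (Fin.last k) = q ∧ (∀ i, f i ∈ S) ∧
    ∀ i : Fin k, dist (f i.castSucc) (f i.succ) ≤ δ

/-- The bridge length β(S): the infimum of all δ ≥ 0 that bridge S. -/
def bridgeLength {n : ℕ} (S : Set (EuclideanSpace ℝ (Fin n))) : ℝ :=
  sInf {δ : ℝ | 0 ≤ δ ∧ Bridges δ S}

/-- The lattice Λ generated by the basis `b`: the ℤ-span of the basis vectors. -/
def lat {n : ℕ} (b : Module.Basis (Fin n) ℝ (EuclideanSpace ℝ (Fin n))) :
    Submodule ℤ (EuclideanSpace ℝ (Fin n)) :=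
  Submodule.span ℤ (Set.range (b : Fin n → EuclideanSpace ℝ (Fin n)))

/-- The cell U_k of the basis `b` scaled by `k`: points ∑ t_i (k v_i) with 0 ≤ t_i < 1,
i.e. points whose coordinates in the basis lie in [0, k). -/
def cellK {n : ℕ} (b : Module.Basis (Fin n) ℝ (EuclideanSpace ℝ (Fin n))) (k : ℕ) :
    Set (EuclideanSpace ℝ (Fin n)) :=
  {x | ∀ i, 0 ≤ b.repr x i ∧ b.repr x i < (k : ℝ)}

/-- The unit cell U of the basis `b`. -/
def unitCell {n : ℕ} (b : Module.Basis (Fin n) ℝ (EuclideanSpace ℝ (Fin n))) :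
    Set (EuclideanSpace ℝ (Fin n)) :=
  cellK b 1

/-- The periodic point set S = Λ + M. -/
def periodicSet {n : ℕ} (b : Module.Basis (Fin n) ℝ (EuclideanSpace ℝ (Fin n)))
    (M : Set (EuclideanSpace ℝ (Fin n))) : Set (EuclideanSpace ℝ (Fin n)) :=
  {x | ∃ l ∈ (lat b : Set (EuclideanSpace ℝ (Fin n))), ∃ p ∈ M, x = l + p}

/-!
Call two points of `S` `δ`-connected if a `δ`-chain in `S` joins them. Since `S` is invariant
under the lattice, so is `δ`-connectedness. If `δ` bridges `M_k`, then every motif point `m` is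
`δ`-connected to `v_i + m'` for every basis vector `v_i` and motif point `m'`, since both lie in
`M_k` (this is where `k ≥ 2` enters). The lattice vectors `l` such that `m` is `δ`-connected
to `l + m'` for all `m, m' ∈ M` therefore form a subgroup containing the basis, hence all of
`Λ`, so `δ` bridges `S`. As `M_k` is bounded, the set of `δ` bridging it is nonempty, and taking
infima gives the claim.
-/

open Relation Metric Bornology

local notation "𝔼" n => EuclideanSpace ℝ (Fin n)

theorem Equivalence.rel_add_of_mem_addSubgroupClosure {V : Type*} [AddCommGroup V]
    {r : V → V → Prop} (hr : Equivalence r) {s M : Set V}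
    (hinv : ∀ g ∈ AddSubgroup.closure s, ∀ x y, r x y → r (g + x) (g + y))
    (hM : ∀ m ∈ M, ∀ m' ∈ M, r m m') (hs : ∀ g ∈ s, ∀ m ∈ M, ∀ m' ∈ M, r m (g + m'))
    {l : V} (hl : l ∈ AddSubgroup.closure s) : ∀ m ∈ M, ∀ m' ∈ M, r m (l + m') := by
  induction hl using AddSubgroup.closure_induction with
  | mem g hg => exact hs g hg
  | zero => simpa only [zero_add] using hM
  | add u v hu hv ihu ihv =>
    intro m hm m' hm'
    have := hinv v hv _ _ (ihu m hm m' hm')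
    rw [← add_assoc, add_comm v u] at this
    exact hr.trans (ihv m hm m hm) this
  | neg u hu ih =>
    intro m hm m' hm'
    have := hinv (-u) (neg_mem hu) _ _ (hr.symm (ih m' hm' m hm))
    rwa [neg_add_cancel_left] at this

variable {n : ℕ}

def BridgeStep (δ : ℝ) (S : Set (𝔼 n)) (x y : 𝔼 n) : Prop :=
  x ∈ S ∧ y ∈ S ∧ dist x y ≤ δ

instance (δ : ℝ) (S : Set (𝔼 n)) : Std.Symm (BridgeStep δ S) where
  symm _ _ h := ⟨h.2.1, h.1, by rw [dist_comm]; exact h.2.2⟩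

theorem equivalence_reflTransGen_bridgeStep (δ : ℝ) (S : Set (𝔼 n)) :
    Equivalence (ReflTransGen (BridgeStep δ S)) :=
  ⟨fun _ => .refl, fun h => Std.Symm.symm _ _ h, .trans⟩

theorem bridges_iff_reflTransGen {δ : ℝ} {S : Set (𝔼 n)} :
    Bridges δ S ↔ ∀ p ∈ S, ∀ q ∈ S, ReflTransGen (BridgeStep δ S) p q := by
  constructor
  · rintro h p hp q hq
    obtain ⟨k, f, rfl, rfl, hmem, hdist⟩ := h p hp q hq
    have reach : ∀ j, ReflTransGen (BridgeStep δ S) (f 0) (f j) := by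
      intro j
      induction j using Fin.induction with
      | zero => exact .refl
      | succ i ih => exact ih.tail ⟨hmem _, hmem _, hdist i⟩
    exact reach _
  · intro h p hp q hq
    have hpq := h p hp q hq
    clear hq
    induction hpq with
    | refl => exact ⟨0, fun _ => p, rfl, rfl, fun _ => hp, fun i => i.elim0⟩
    | @tail x y _ hxy ih =>
      obtain ⟨k, f, h0, hlast, hmem, hdist⟩ := ih
      refine ⟨k + 1, Fin.snoc f y, ?_, by simp, ?_, ?_⟩
      · exact (Fin.snoc_castSucc (α := fun _ => 𝔼 n) y f 0).trans h0
      · intro i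
        induction i using Fin.lastCases with
        | last => simpa using hxy.2.1
        | cast j => simpa using hmem j
      · intro i
        induction i using Fin.lastCases with
        | last => simpa [hlast] using hxy.2.2
        | cast j =>
          rw [Fin.succ_castSucc, Fin.snoc_castSucc, Fin.snoc_castSucc]
          exact hdist j

theorem bridges_diam {S : Set (𝔼 n)} (hS : IsBounded S) : Bridges (diam S) S :=
  bridges_iff_reflTransGen.2 fun _ hp _ hq => .single ⟨hp, hq, dist_le_diam_of_mem hS hp hq⟩

theorem bridgeLength_le_of_bridges {S T : Set (𝔼 n)} (hT : IsBounded T)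
    (h : ∀ δ, Bridges δ T → Bridges δ S) : bridgeLength S ≤ bridgeLength T :=
  csInf_le_csInf ⟨0, fun _ hδ => hδ.1⟩ ⟨diam T, diam_nonneg, bridges_diam hT⟩
    fun δ hδ => ⟨hδ.1, h δ hδ.2⟩

theorem isBounded_cellK (b : Module.Basis (Fin n) ℝ (𝔼 n)) (k : ℕ) :
    IsBounded (cellK b k) := by
  refine isBounded_iff_forall_norm_le.2 ⟨∑ i, k * ‖b i‖, fun x hx => ?_⟩
  calc ‖x‖ = ‖∑ i, b.repr x i • b i‖ := by rw [b.sum_repr]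
    _ ≤ ∑ i, ‖b.repr x i • b i‖ := norm_sum_le _ _
    _ ≤ ∑ i, k * ‖b i‖ := by
      gcongr with i
      rw [norm_smul, Real.norm_of_nonneg (hx i).1]
      gcongr
      exact (hx i).2.le

theorem lat_toAddSubgroup_eq_closure (b : Module.Basis (Fin n) ℝ (𝔼 n)) :
    (lat b).toAddSubgroup = AddSubgroup.closure (Set.range b) :=
  Submodule.span_int_eq_addSubgroupClosure _

variable {b : Module.Basis (Fin n) ℝ (𝔼 n)} {M : Set (𝔼 n)} {k : ℕ}

theorem unitCell_subset_cellK (hk : 1 ≤ k) : unitCell b ⊆ cellK b k := fun x hx i =>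
  ⟨(hx i).1, (hx i).2.trans_le (by exact_mod_cast hk)⟩

theorem basis_add_mem_cellK (hk : 2 ≤ k) (i : Fin n) {x : 𝔼 n} (hx : x ∈ unitCell b) :
    b i + x ∈ cellK b k := by
  intro j
  have hxj := hx j
  have hk' : (2 : ℝ) ≤ k := by exact_mod_cast hk
  simp only [map_add, Finsupp.add_apply, b.repr_self, Finsupp.single_apply,
    Nat.cast_one] at hxj ⊢
  split_ifs <;> constructor <;> linarith

theorem mem_periodicSet_of_mem {m : 𝔼 n} (hm : m ∈ M) : m ∈ periodicSet b M :=
  ⟨0, zero_mem _, m, hm, (zero_add m).symm⟩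

theorem add_mem_periodicSet {l x : 𝔼 n} (hl : l ∈ lat b) (hx : x ∈ periodicSet b M) :
    l + x ∈ periodicSet b M := by
  obtain ⟨l', hl', m, hm, rfl⟩ := hx
  exact ⟨l + l', add_mem hl hl', m, hm, (add_assoc _ _ _).symm⟩

theorem reflTransGen_bridgeStep_add {δ : ℝ} {l x y : 𝔼 n} (hl : l ∈ lat b)
    (h : ReflTransGen (BridgeStep δ (periodicSet b M)) x y) :
    ReflTransGen (BridgeStep δ (periodicSet b M)) (l + x) (l + y) :=
  h.lift (l + ·) fun _ _ hs =>
    ⟨add_mem_periodicSet hl hs.1, add_mem_periodicSet hl hs.2.1, by simpa using hs.2.2⟩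

theorem Bridges.periodicSet_of_inter_cellK {δ : ℝ} (hMU : M ⊆ unitCell b) (hk : 2 ≤ k)
    (hB : Bridges δ (periodicSet b M ∩ cellK b k)) : Bridges δ (periodicSet b M) := by
  set r := ReflTransGen (BridgeStep δ (periodicSet b M))
  have hr : Equivalence r := equivalence_reflTransGen_bridgeStep _ _
  have reach {x y} (hx : x ∈ periodicSet b M ∩ cellK b k)
      (hy : y ∈ periodicSet b M ∩ cellK b k) : r x y :=
    ReflTransGen.mono (fun _ _ h => ⟨h.1.1, h.2.1.1, h.2.2⟩) _ _
      (bridges_iff_reflTransGen.1 hB x hx y hy)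
  have hM : ∀ m ∈ M, m ∈ periodicSet b M ∩ cellK b k := fun m hm =>
    ⟨mem_periodicSet_of_mem hm, unitCell_subset_cellK (by omega) (hMU hm)⟩
  have hlat {l} (hl : l ∈ lat b) : ∀ m ∈ M, ∀ m' ∈ M, r m (l + m') := by
    refine hr.rel_add_of_mem_addSubgroupClosure (s := Set.range b) ?_ ?_ ?_
      (lat_toAddSubgroup_eq_closure b ▸ hl)
    · intro g hg _ _
      exact reflTransGen_bridgeStep_add (by rwa [← lat_toAddSubgroup_eq_closure] at hg)
    · exact fun m hm m' hm' => reach (hM m hm) (hM m' hm')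
    · rintro _ ⟨i, rfl⟩ m hm m' hm'
      exact reach (hM m hm) ⟨add_mem_periodicSet (Submodule.subset_span ⟨i, rfl⟩)
        (mem_periodicSet_of_mem hm'), basis_add_mem_cellK hk i (hMU hm')⟩
  refine bridges_iff_reflTransGen.2 ?_
  rintro _ ⟨l, hl, m, hm, rfl⟩ _ ⟨l', hl', m', hm', rfl⟩
  exact hr.trans (hr.symm (hlat hl m hm m hm)) (hlat hl' m hm m' hm')

theorem bridgeLength_le_extended_motif_general {n : ℕ}
    (b : Module.Basis (Fin n) ℝ (EuclideanSpace ℝ (Fin n)))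
    (M : Set (EuclideanSpace ℝ (Fin n)))
    (hMU : M ⊆ unitCell b) (k : ℕ) (hk : 2 ≤ k) :
    bridgeLength (periodicSet b M) ≤ bridgeLength (periodicSet b M ∩ cellK b k) :=
  bridgeLength_le_of_bridges ((isBounded_cellK b k).subset Set.inter_subset_right)
    fun _ => Bridges.periodicSet_of_inter_cellK hMU hk

/-- For a periodic point set S = Λ + M with unit cell U on basis v_1,…,v_n
and the extended motif M_k = S ∩ U_k (k ≥ 2), the bridge length satisfies β(S) ≤ β(M_k). -/
theorem bridgeLength_le_extended_motif {n : ℕ}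
    (b : Module.Basis (Fin n) ℝ (EuclideanSpace ℝ (Fin n)))
    (M : Set (EuclideanSpace ℝ (Fin n))) (hMfin : M.Finite) (hMne : M.Nonempty)
    (hMU : M ⊆ unitCell b) (k : ℕ) (hk : 2 ≤ k) :
    bridgeLength (periodicSet b M) ≤ bridgeLength (periodicSet b M ∩ cellK b k) :=
  bridgeLength_le_extended_motif_general b M hMU k hk
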